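/- For a 1-reduced simplicial set X (a simplicial set with a single vertex and no non-degenerate 1-simplices), the hat-cobar construction Ω̂C_*(X) coincides with Adams' cobar construction ΩC_*(X) of the dg coalgebra C_*(X). -/

import Mathlib

open CategoryTheory

local notation:1000 X " _⦋" n "⦌" => CategoryTheory.Functor.obj (X : CategoryTheory.SimplicialObject _) (Opposite.op (SimplexCategory.mk n))

local notation "⦋" n "⦌" => SimplexCategory.mk n

noncomputable section

namespace CombModel

/-- An auxiliary monotone map `Fin (a+1) →o Fin (b+1)` obtained by truncating a monotone
function `ℕ → ℕ`. -/
def mkOH {a b : ℕ} (g : ℕ → ℕ) (hg : Monotone g) : Fin (a + 1) →o Fin (b + 1) where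
  toFun i := ⟨min (g i) b, Nat.lt_succ_of_le (min_le_right _ _)⟩
  monotone' := by
    intro i j h
    simp only [Fin.mk_le_mk]
    exact min_le_min (hg (Fin.le_def.mp h)) le_rfl

/-- A "system of simplices": a family of sets of `n`-simplices, contravariantly acted on by
monotone maps of vertices, with a set of vertices `V`, vertex maps, and for every vertex the
corresponding totally degenerate simplices.  Both a simplicial set and the simplicial set
`Z(X)` give rise to such a system. -/
structure SpxSys where
  S : ℕ → Type
  map : ∀ {m n : ℕ}, (Fin (m + 1) →o Fin (n + 1)) → S n → S m
  V : Type
  vt : ∀ {n : ℕ}, S n → Fin (n + 1) → V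
  pt : ∀ (n : ℕ), V → S n

namespace SpxSys

variable (𝒮 : SpxSys)

/-- First vertex of a simplex. -/
def mn {n : ℕ} (σ : 𝒮.S n) : 𝒮.V := 𝒮.vt σ 0

/-- Last vertex of a simplex. -/
def mx {n : ℕ} (σ : 𝒮.S n) : 𝒮.V := 𝒮.vt σ (Fin.last n)

/-- Restriction along the (truncated) identity of vertices; for `n ≤ m` this is the front
face spanned by the vertices `0, …, n`. -/
def reindex {m : ℕ} (n : ℕ) (σ : 𝒮.S m) : 𝒮.S n :=
  𝒮.map (mkOH id monotone_id) σ

/-- The back face of dimension `n` (spanned by the last `n+1` vertices). -/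
def back {m : ℕ} (n : ℕ) (σ : 𝒮.S m) : 𝒮.S n :=
  𝒮.map (mkOH (fun v => v + (m - n)) (fun _ _ h => by dsimp only; omega)) σ

/-- The `i`-th face `∂ᵢ`. -/
def face {m : ℕ} (i : ℕ) (σ : 𝒮.S (m + 1)) : 𝒮.S m :=
  𝒮.map (mkOH (fun v => if v < i then v else v + 1)
    (fun x y h => by dsimp only; split_ifs <;> omega)) σ

/-- The `j`-th degeneracy `sⱼ`. -/
def degen {m : ℕ} (j : ℕ) (σ : 𝒮.S m) : 𝒮.S (m + 1) :=
  𝒮.map (mkOH (fun v => if v ≤ j then v else v - 1)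
    (fun x y h => by dsimp only; split_ifs <;> omega)) σ

/-- A letter `σ̄`: a simplex of positive dimension `d + 1`, regarded with (cubical) degree
`d`. -/
structure Ltr where
  d : ℕ
  s : 𝒮.S (d + 1)

variable {𝒮}

/-- First vertex of a letter. -/
def Ltr.mnL (a : Ltr 𝒮) : 𝒮.V := 𝒮.mn a.s

/-- Last vertex of a letter. -/
def Ltr.mxL (a : Ltr 𝒮) : 𝒮.V := 𝒮.mx a.s

variable (𝒮)

/-- Composability of letters. -/
def adj (a b : Ltr 𝒮) : Prop := a.mxL = b.mnL

/-- (Cubical) degree of a word of letters. -/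
def degL (l : List (Ltr 𝒮)) : ℕ := (l.map Ltr.d).sum

/-- The letter `(s_{n_i} σ)‾` (last degeneracy). -/
def sLast (a : Ltr 𝒮) : Ltr 𝒮 := ⟨a.d + 1, 𝒮.degen (a.d + 1) a.s⟩

/-- The letter `(s₀ σ)‾` (first degeneracy). -/
def sFirst (a : Ltr 𝒮) : Ltr 𝒮 := ⟨a.d + 1, 𝒮.degen 0 a.s⟩

/-- The totally degenerate letter of degree `d` on the vertex `v`. -/
def ptLtr (d : ℕ) (v : 𝒮.V) : Ltr 𝒮 := ⟨d, 𝒮.pt (d + 1) v⟩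

/-- The one-letter face `d¹ᵢ σ̄ = (∂ᵢ σ)‾`. -/
def d1L (i : ℕ) (a : Ltr 𝒮) : List (Ltr 𝒮) :=
  [⟨a.d - 1, 𝒮.reindex _ (𝒮.face i a.s)⟩]

/-- The two-letter face `d⁰ᵢ σ̄ = (∂_{i+1}⋯∂_{m+1} σ)‾ ⋅ (∂₀⋯∂_{i−1} σ)‾`. -/
def d0L (i : ℕ) (a : Ltr 𝒮) : List (Ltr 𝒮) :=
  [⟨i - 1, 𝒮.reindex _ a.s⟩, ⟨a.d - i, 𝒮.back _ a.s⟩]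

/-- The `i`-th cubical face (`ε = true` for `d¹ᵢ`, `ε = false` for `d⁰ᵢ`) of a word. -/
def faceList (ε : Bool) : ℕ → List (Ltr 𝒮) → List (Ltr 𝒮)
  | _, [] => []
  | i, a :: r =>
      if i ≤ a.d then (if ε then 𝒮.d1L i a else 𝒮.d0L i a) ++ r
      else a :: faceList ε (i - a.d) r

/-- The `j`-th degeneracy `η_j` of a word. -/
def degenList : ℕ → List (Ltr 𝒮) → List (Ltr 𝒮)
  | _, [] => []
  | j, a :: r =>
      if j ≤ a.d + 1 then (⟨a.d + 1, 𝒮.degen (j - 1) a.s⟩ : Ltr 𝒮) :: r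
      else a :: degenList (j - (a.d + 1)) r

/-- The generic word relations: shifting a last degeneracy of a letter to a first
degeneracy of the next letter, and deleting a letter which is totally degenerate on a
vertex (a collapsed bead). -/
inductive WShift : List (Ltr 𝒮) → List (Ltr 𝒮) → Prop
  | shift (l₁ l₂ : List (Ltr 𝒮)) (a b : Ltr 𝒮) :
      WShift (l₁ ++ 𝒮.sLast a :: b :: l₂) (l₁ ++ a :: 𝒮.sFirst b :: l₂)

/-! ### Topological cubes -/

/-- The standard topological `n`-cube. -/
abbrev cube (n : ℕ) : Type := Fin n → unitInterval

/-- Coordinates of a cube point, `1`-indexed, extended by `0`. -/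
def tofn {n : ℕ} (t : cube n) : ℕ → unitInterval :=
  fun m => if h : 1 ≤ m ∧ m ≤ n then t ⟨m - 1, by omega⟩ else 0

/-- A cube point from a `1`-indexed family of coordinates. -/
def offn (n : ℕ) (f : ℕ → unitInterval) : cube n := fun j => f ((j : ℕ) + 1)

/-- Cubical coface: insert the value `ε` as the `i`-th coordinate. -/
def insC (i : ℕ) (ε : unitInterval) (f : ℕ → unitInterval) : ℕ → unitInterval :=
  fun m => if m < i then f m else if m = i then ε else f (m - 1)

/-- Drop the `p`-th coordinate. -/
def dropC (p : ℕ) (f : ℕ → unitInterval) : ℕ → unitInterval :=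
  fun m => if m < p then f m else f (m + 1)

/-- Drop `d` consecutive coordinates starting at position `p`. -/
def dropR (p d : ℕ) (f : ℕ → unitInterval) : ℕ → unitInterval :=
  fun m => if m < p then f m else f (m + d)

/-- Cubical connection: replace the coordinates `(t_p, t_{p+1})` by `min (t_p, t_{p+1})`. -/
def minC (p : ℕ) (f : ℕ → unitInterval) : ℕ → unitInterval :=
  fun m => if m < p then f m else if m = p then min (f p) (f (p + 1)) else f (m + 1)

/-- The cubical degeneracy/connection `ς^j : I^{n+1} → I^n` corresponding to the word
degeneracy `η_j`: on the relevant cubical factor it either drops a coordinate (outer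
degeneracies) or takes the min of two adjacent coordinates (connections). -/
def projD : List (Ltr 𝒮) → ℕ → ℕ → (ℕ → unitInterval) → (ℕ → unitInterval)
  | [], _, _, f => f
  | a :: r, j, off, f =>
      if j ≤ a.d + 1 then (if j = 1 then dropC (off + 1) f else minC (off + j - 1) f)
      else projD r (j - (a.d + 1)) (off + a.d) f

variable (x₀ : 𝒮.V)

/-- Based composable words: the elements of `Ω̂X` (before imposing the identifications). -/
def Wrd := {l : List (Ltr 𝒮) // l ≠ [] ∧ l.Chain' (𝒮.adj) ∧
  (∀ a ∈ l.head?, a.mnL = x₀) ∧ (∀ a ∈ l.getLast?, a.mxL = x₀)}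

instance : TopologicalSpace (Wrd 𝒮 x₀) := ⊥

/-- Points of the disjoint union of the cubes indexed by based words. -/
abbrev TotW := Σ w : Wrd 𝒮 x₀, cube (𝒮.degL w.1)

/-- The identifications defining the geometric realization: cubical faces against the word
face maps `d⁰ᵢ, d¹ᵢ`, cubical degeneracies and min-connections against the word
degeneracies `η_j`, degree-preserving word relations (the degeneracy-shifting relation
`WShift` and the extra relations `R`, e.g. cancellation of inverse pairs of `1`-simplices),
and deletion of a letter which is totally degenerate on a vertex (a collapsed bead). -/
inductive RealRel (R : List (Ltr 𝒮) → List (Ltr 𝒮) → Prop) : TotW 𝒮 x₀ → TotW 𝒮 x₀ → Prop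
  | face (w w' : Wrd 𝒮 x₀) (i : ℕ) (ε : Bool) (h1 : 1 ≤ i) (h2 : i ≤ 𝒮.degL w.1)
      (hw : w'.1 = 𝒮.faceList ε i w.1) (t : cube (𝒮.degL w'.1)) :
      RealRel R ⟨w, offn _ (insC i (if ε then 1 else 0) (tofn t))⟩ ⟨w', t⟩
  | degen (w w' : Wrd 𝒮 x₀) (j : ℕ) (h1 : 1 ≤ j) (h2 : j ≤ 𝒮.degL w.1 + w.1.length + 1)
      (hw : w'.1 = 𝒮.degenList j w.1) (t : cube (𝒮.degL w'.1)) :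
      RealRel R ⟨w, offn _ (𝒮.projD w.1 j 0 (tofn t))⟩ ⟨w', t⟩
  | wrel (w w' : Wrd 𝒮 x₀) (h : 𝒮.WShift w.1 w'.1 ∨ R w.1 w'.1) (t : cube (𝒮.degL w.1)) :
      RealRel R ⟨w, t⟩ ⟨w', offn _ (tofn t)⟩
  | delete (w w' : Wrd 𝒮 x₀) (l₁ l₂ : List (Ltr 𝒮)) (d : ℕ) (v : 𝒮.V)
      (hw : w.1 = l₁ ++ 𝒮.ptLtr d v :: l₂) (hw' : w'.1 = l₁ ++ l₂)
      (t : cube (𝒮.degL w.1)) :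
      RealRel R ⟨w, t⟩ ⟨w', offn _ (dropR (𝒮.degL l₁ + 1) d (tofn t))⟩

/-- The geometric realization of the necklical set of words. -/
def WordReal (R : List (Ltr 𝒮) → List (Ltr 𝒮) → Prop) : Type :=
  Quot (RealRel 𝒮 x₀ R)

instance (R : List (Ltr 𝒮) → List (Ltr 𝒮) → Prop) : TopologicalSpace (WordReal 𝒮 x₀ R) :=
  instTopologicalSpaceQuot

/-- Concatenation of based words. -/
def concatW (w₁ w₂ : Wrd 𝒮 x₀) : Wrd 𝒮 x₀ := by
  obtain ⟨l₁, h₁ne, h₁ch, h₁hd, h₁lt⟩ := w₁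
  obtain ⟨l₂, h₂ne, h₂ch, h₂hd, h₂lt⟩ := w₂
  refine ⟨l₁ ++ l₂, by simp [h₁ne], ?_, ?_, ?_⟩
  · refine List.IsChain.append h₁ch h₂ch ?_
    intro a ha b hb
    show a.mxL = b.mnL
    rw [h₁lt a ha, ← h₂hd b hb]
  · obtain ⟨a, l, rfl⟩ := List.exists_cons_of_ne_nil h₁ne
    intro b hb
    apply h₁hd
    simpa using hb
  · intro b hb
    apply h₂lt
    rwa [List.getLast?_append_of_ne_nil _ h₂ne] at hb

/-- Concatenation of cube points over a concatenation of words. -/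
def concatC (w₁ w₂ : Wrd 𝒮 x₀) (t₁ : cube (𝒮.degL w₁.1)) (t₂ : cube (𝒮.degL w₂.1)) :
    cube (𝒮.degL (𝒮.concatW x₀ w₁ w₂).1) :=
  offn _ (fun m => if m ≤ 𝒮.degL w₁.1 then tofn t₁ m else tofn t₂ (m - 𝒮.degL w₁.1))

end SpxSys

end CombModel

namespace CombModel

open SpxSys

variable (X : SSet.{0})

/-- Action of a monotone vertex map on the simplices of a simplicial set. -/
def XmapN {m n : ℕ} (g : Fin (m + 1) →o Fin (n + 1)) : X _⦋n⦌ → X _⦋m⦌ :=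
  X.map (SimplexCategory.mkHom g).op

/-- The vertex `i` of a `1`-simplex. -/
def vtx1 (i : Fin 2) : X _⦋1⦌ → X _⦋0⦌ :=
  X.map (SimplexCategory.const ⦋0⦌ ⦋1⦌ i).op

/-- The degenerate `1`-simplex on a vertex. -/
def deg1 : X _⦋0⦌ → X _⦋1⦌ :=
  X.map (SimplexCategory.const ⦋1⦌ ⦋0⦌ 0).op

/-- Degeneracy of `1`-simplices. -/
def Deg1 (x : X _⦋1⦌) : Prop := ∃ v : X _⦋0⦌, x = deg1 X v

/-- Nondegenerate `1`-simplices of `X` (those getting a formal inverse in `Z(X)`). -/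
abbrev ND1 := {x : X _⦋1⦌ // ¬ Deg1 X x}

/-- The totally degenerate `n`-simplex on a vertex. -/
def vdeg (n : ℕ) : X _⦋0⦌ → X _⦋n⦌ :=
  X.map (SimplexCategory.const ⦋n⦌ ⦋0⦌ 0).op

/-- The `n`-simplices of `Z(X)`, the simplicial set obtained from `X` by freely adjoining,
for every nondegenerate `1`-simplex `x`, a `1`-simplex `x^op` with `∂₀(x^op) = ∂₁(x)` and
`∂₁(x^op) = ∂₀(x)`: they are the `n`-simplices of `X` together with the (iterated
degeneracies of the) formal inverses, recorded as a nondegenerate `1`-simplex of `X`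
together with a monotone surjection `[n] ↠ [1]`. -/
def ZS (n : ℕ) : Type :=
  X _⦋n⦌ ⊕ (ND1 X × {α : Fin (n + 1) →o Fin 2 // Function.Surjective ⇑α})

/-- The simplicial structure maps of `Z(X)`. -/
def mapZ {m n : ℕ} (g : Fin (m + 1) →o Fin (n + 1)) : ZS X n → ZS X m
  | .inl σ => .inl (XmapN X g σ)
  | .inr (x, α) =>
      if h : Function.Surjective ⇑(α.1.comp g) then .inr (x, ⟨α.1.comp g, h⟩)
      else .inl (vdeg X m (if α.1 (g 0) = 0 then vtx1 X 1 x.1 else vtx1 X 0 x.1))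

/-- Vertices of simplices of `Z(X)`; recall that the first vertex of `x^op` is `∂₀x` and
the last vertex of `x^op` is `∂₁x`. -/
def vtxZ {n : ℕ} : ZS X n → Fin (n + 1) → X _⦋0⦌
  | .inl σ, i => X.map (SimplexCategory.const ⦋0⦌ ⦋n⦌ i).op σ
  | .inr (x, α), i => if α.1 i = 0 then vtx1 X 1 x.1 else vtx1 X 0 x.1

/-- The system of simplices of the simplicial set `Z(X)`. -/
def ZSys : SpxSys where
  S := ZS X
  map := mapZ X
  V := X _⦋0⦌
  vt := vtxZ X
  pt n v := .inl (vdeg X n v)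

/-- The system of simplices of the simplicial set `X` itself. -/
def XSys : SpxSys where
  S n := X _⦋n⦌
  map := XmapN X
  V := X _⦋0⦌
  vt σ i := X.map (SimplexCategory.const ⦋0⦌ _ i).op σ
  pt n v := vdeg X n v

/-- The letter given by a `1`-simplex of `X`. -/
def xLtr (x : X _⦋1⦌) : Ltr (ZSys X) := ⟨0, Sum.inl x⟩

/-- The letter given by the formal inverse `x^op` of a nondegenerate `1`-simplex. -/
def opLtr (x : ND1 X) : Ltr (ZSys X) :=
  ⟨0, Sum.inr (x, ⟨OrderHom.id, Function.surjective_id⟩)⟩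

/-- The unit letter `e = (s₀ v)‾` at a vertex `v`. -/
def eLtr (v : X _⦋0⦌) : Ltr (ZSys X) := ⟨0, Sum.inl (deg1 X v)⟩

/-- The cancellation relations of `Ω̂X`: an adjacent pair of mutually inverse `1`-simplices
inside a longer word is deleted, and such a pair alone equals `(s₀ (min σᵢ))‾`. -/
inductive CancelRel : List (Ltr (ZSys X)) → List (Ltr (ZSys X)) → Prop
  | cancel₁ (l₁ l₂ : List (Ltr (ZSys X))) (x : ND1 X) (h : l₁ ++ l₂ ≠ []) :
      CancelRel (l₁ ++ xLtr X x.1 :: opLtr X x :: l₂) (l₁ ++ l₂)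
  | cancel₂ (l₁ l₂ : List (Ltr (ZSys X))) (x : ND1 X) (h : l₁ ++ l₂ ≠ []) :
      CancelRel (l₁ ++ opLtr X x :: xLtr X x.1 :: l₂) (l₁ ++ l₂)
  | pair₁ (x : ND1 X) :
      CancelRel [xLtr X x.1, opLtr X x] [eLtr X (vtx1 X 0 x.1)]
  | pair₂ (x : ND1 X) :
      CancelRel [opLtr X x, xLtr X x.1] [eLtr X (vtx1 X 1 x.1)]

/-- Simplicial path connectedness. -/
def PathConn : Prop :=
  ∀ v w : X _⦋0⦌,
    Relation.EqvGen (fun a b => ∃ e : X _⦋1⦌, vtx1 X 0 e = a ∧ vtx1 X 1 e = b) v w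

variable (x₀ : X _⦋0⦌)

/-- The geometric realization `|Ω̂X|` of the necklical set `Ω̂X` of based words in `Z(X)`. -/
def OmegaReal : Type := WordReal (ZSys X) x₀ (CancelRel X)

instance : TopologicalSpace (OmegaReal X x₀) := instTopologicalSpaceQuot

lemma vtxZ_e (v : X _⦋0⦌) (i : Fin 2) : vtxZ X (Sum.inl (deg1 X v) : ZS X 1) i = v := by
  simp only [vtxZ, deg1]
  rw [← FunctorToTypes.map_comp_apply, ← op_comp]
  rw [SimplexCategory.hom_zero_zero (SimplexCategory.const ⦋0⦌ ⦋1⦌ i ≫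
    SimplexCategory.const ⦋1⦌ ⦋0⦌ 0)]
  simp

/-- The unit word `e`. -/
def unitW : Wrd (ZSys X) x₀ := by
  refine ⟨[eLtr X x₀], by simp, by simp [List.Chain'], ?_, ?_⟩
  · intro a ha
    simp only [List.head?_cons, Option.mem_def, Option.some_inj] at ha
    subst ha
    show vtxZ X (Sum.inl (deg1 X x₀) : ZS X 1) 0 = x₀
    exact vtxZ_e X x₀ 0
  · intro a ha
    simp only [List.getLast?_singleton, Option.mem_def, Option.some_inj] at ha
    subst ha
    show vtxZ X (Sum.inl (deg1 X x₀) : ZS X 1) (Fin.last 1) = x₀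
    exact vtxZ_e X x₀ (Fin.last 1)

/-- The basepoint of `|Ω̂X|`. -/
def basePtO : OmegaReal X x₀ :=
  Quot.mk _ ⟨unitW X x₀, fun _ => 0⟩

end CombModel

namespace CombModel

namespace SpxSys

variable (k : Type) [CommRing k] (𝒮 : SpxSys)

/-- The free `k`-algebra on the letters: the underlying algebra of the various chain
algebras and cobar constructions, with basis all words of letters. -/
abbrev FWS := MonoidAlgebra k (FreeMonoid (Ltr 𝒮))

/-- The basis element of a word. -/
def bas (l : List (Ltr 𝒮)) : FWS k 𝒮 :=
  MonoidAlgebra.single (FreeMonoid.ofList l) 1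

variable (x₀ : 𝒮.V)

/-- Composable words based at `x₀` (the empty word included, as the unit). -/
def ValidW (l : List (Ltr 𝒮)) : Prop :=
  l.Chain' (𝒮.adj) ∧ (∀ a ∈ l.head?, a.mnL = x₀) ∧ (∀ a ∈ l.getLast?, a.mxL = x₀)

/-- The submodule spanned by the composable based words (the underlying module of both
the chains of the necklical set of words and of `Ω′A`). -/
def MCs : Submodule k (FWS k 𝒮) :=
  Submodule.span k {f | ∃ l, ValidW 𝒮 x₀ l ∧ f = bas k 𝒮 l}

/-- The submodule spanned by the words of (cubical) degree `n`. -/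
def gradeS (n : ℕ) : Submodule k (FWS k 𝒮) :=
  Submodule.span k {f | ∃ l, 𝒮.degL l = n ∧ f = bas k 𝒮 l}

/-- The cobar differential of a single letter:
`d₁[ā] + d₂[ā] = −[(d_A a)‾] + Σ (−1)^{|a′|}[ā′|ā″]`, where `d_A` is the truncated
simplicial boundary and the second sum ranges over the nonprimitive part of the
Alexander–Whitney diagonal. -/
def dLet (a : Ltr 𝒮) : FWS k 𝒮 :=
  (∑ i ∈ Finset.Icc 1 a.d, ((-1 : k)) ^ (i + 1) • bas k 𝒮 (𝒮.d1L i a)) +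
  (∑ j ∈ Finset.Icc 1 a.d, ((-1 : k)) ^ j • bas k 𝒮 (𝒮.d0L j a))

/-- The cobar differential on a word, extending `dLet` as a derivation. -/
def dOmWord (l : List (Ltr 𝒮)) : FWS k 𝒮 :=
  ∑ idx ∈ Finset.range l.length,
    ((-1 : k)) ^ (𝒮.degL (l.take idx) + idx) •
      (bas k 𝒮 (l.take idx) * dLet k 𝒮 (l.getD idx (𝒮.ptLtr 0 x₀)) *
        bas k 𝒮 (l.drop (idx + 1)))

/-- The cobar differential, as a linear endomorphism of the free word algebra. -/
def dOmS : FWS k 𝒮 →ₗ[k] FWS k 𝒮 :=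
  Finsupp.lift (FWS k 𝒮) k (FreeMonoid (Ltr 𝒮))
    (fun w => dOmWord k 𝒮 x₀ (FreeMonoid.toList w)) ∘ₗ
    (MonoidAlgebra.coeffLinearEquiv k).toLinearMap

/-- The cubical differential `d = Σ (−1)^i (d¹ᵢ − d⁰ᵢ)` on a word. -/
def dCWord (l : List (Ltr 𝒮)) : FWS k 𝒮 :=
  ∑ i ∈ Finset.Icc 1 (𝒮.degL l),
    ((-1 : k)) ^ i • (bas k 𝒮 (𝒮.faceList true i l) - bas k 𝒮 (𝒮.faceList false i l))

/-- The cubical differential, as a linear endomorphism of the free word algebra. -/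
def dCs : FWS k 𝒮 →ₗ[k] FWS k 𝒮 :=
  Finsupp.lift (FWS k 𝒮) k (FreeMonoid (Ltr 𝒮))
    (fun w => dCWord k 𝒮 (FreeMonoid.toList w)) ∘ₗ
    (MonoidAlgebra.coeffLinearEquiv k).toLinearMap

/-- The generic word identifications, as elements of the free word algebra: the
degeneracy-shifting relation, the deletion of totally degenerate letters inside longer
words (collapsed beads), and the identification of the unit word `e = (s₀x₀)‾` with the
empty word. -/
def relBase : Set (FWS k 𝒮) :=
  {f | ∃ l₁ l₂ a b, f = bas k 𝒮 (l₁ ++ 𝒮.sLast a :: b :: l₂) -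
    bas k 𝒮 (l₁ ++ a :: 𝒮.sFirst b :: l₂)} ∪
  {f | ∃ l₁ l₂ d v, l₁ ++ l₂ ≠ [] ∧
    f = bas k 𝒮 (l₁ ++ 𝒮.ptLtr d v :: l₂) - bas k 𝒮 (l₁ ++ l₂)} ∪
  {f | f = bas k 𝒮 [𝒮.ptLtr 0 x₀] - bas k 𝒮 []}

/-- The set of (positive-degree) degeneracies of the unit `e`, to be divided out in
`C_*(Ω̂X) = C′_*(Ω̂X) / C′_*(D(e))`. -/
def relUnitDeg : Set (FWS k 𝒮) :=
  {f | ∃ d : ℕ, f = bas k 𝒮 [𝒮.ptLtr (d + 1) x₀]}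

end SpxSys

open SpxSys

variable (k : Type) [CommRing k] (X : SSet.{0}) (x₀ : X _⦋0⦌)

/-- The cancellation identifications of `Ω̂X` in the free word algebra. -/
def relCancel : Set (FWS k (ZSys X)) :=
  {f | ∃ (l₁ l₂ : List (Ltr (ZSys X))) (x : ND1 X), l₁ ++ l₂ ≠ [] ∧
    f = bas k (ZSys X) (l₁ ++ xLtr X x.1 :: opLtr X x :: l₂) - bas k (ZSys X) (l₁ ++ l₂)} ∪
  {f | ∃ (l₁ l₂ : List (Ltr (ZSys X))) (x : ND1 X), l₁ ++ l₂ ≠ [] ∧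
    f = bas k (ZSys X) (l₁ ++ opLtr X x :: xLtr X x.1 :: l₂) - bas k (ZSys X) (l₁ ++ l₂)} ∪
  {f | ∃ x : ND1 X,
    f = bas k (ZSys X) [xLtr X x.1, opLtr X x] - bas k (ZSys X) [eLtr X (vtx1 X 0 x.1)]} ∪
  {f | ∃ x : ND1 X,
    f = bas k (ZSys X) [opLtr X x, xLtr X x.1] - bas k (ZSys X) [eLtr X (vtx1 X 1 x.1)]}

/-- The submodule of relations defining the dg algebra `C_*(Ω̂X)` as a subquotient of the
free word algebra. -/
def NCz : Submodule k (FWS k (ZSys X)) :=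
  Submodule.span k (relBase k (ZSys X) x₀ ∪ relUnitDeg k (ZSys X) x₀ ∪ relCancel k X)

/-- The relations defining the hat-cobar construction `Ω̂C_*(X)` as a subquotient of the
free word algebra: monomials containing a letter from `C_{*>0}(X₀)` (totally degenerate on
a vertex) vanish — this is the quotient defining the coalgebra `A` — and an adjacent pair
of mutually inverse `1`-simplices may be deleted (`[ā|ā^op] ∼ 1`). -/
def NOz : Submodule k (FWS k (ZSys X)) :=
  Submodule.span k
    ({f | ∃ l₁ l₂ d v, f = bas k (ZSys X) (l₁ ++ (ZSys X).ptLtr d v :: l₂)} ∪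
    {f | ∃ (l₁ l₂ : List (Ltr (ZSys X))) (x : ND1 X),
      f = bas k (ZSys X) (l₁ ++ xLtr X x.1 :: opLtr X x :: l₂) - bas k (ZSys X) (l₁ ++ l₂)} ∪
    {f | ∃ (l₁ l₂ : List (Ltr (ZSys X))) (x : ND1 X),
      f = bas k (ZSys X) (l₁ ++ opLtr X x :: xLtr X x.1 :: l₂) - bas k (ZSys X) (l₁ ++ l₂)})

end CombModel

namespace CombModel

open SpxSys

variable (k : Type) [CommRing k] (X : SSet.{0}) (x₀ : X _⦋0⦌)

/-- A letter coming from a simplex of `X` itself (rather than a formal inverse). -/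
def IsXLtr (a : Ltr (ZSys X)) : Prop := ∃ σ : X _⦋a.d + 1⦌, a.s = Sum.inl σ

/-- The underlying module of Adams' cobar construction `ΩC_*(X)`: the span of the words
of (positive-dimensional) simplices of `X` itself. -/
def MAdams : Submodule k (FWS k (ZSys X)) :=
  Submodule.span k {f | ∃ l, ValidW (ZSys X) x₀ l ∧ (∀ a ∈ l, IsXLtr X a) ∧
    f = bas k (ZSys X) l}

/-- The relations of Adams' cobar construction on the dg coalgebra
`C_*(X) = C_*(X)/C_{*>0}(x₀)`: monomials containing a totally degenerate letter vanish. -/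
def NAdams : Submodule k (FWS k (ZSys X)) :=
  Submodule.span k
    {f | ∃ l₁ l₂ d v, f = bas k (ZSys X) (l₁ ++ (ZSys X).ptLtr d v :: l₂)}

/- Without nondegenerate `1`-simplices `Z(X)` adjoins no formal inverses: every letter comes
from `X` and the cancellation relations are vacuous, so the identity of the free word algebra
already identifies `Ω̂C_*(X)` with `ΩC_*(X)`. -/

variable {X} in
lemma isEmpty_ND1_of_forall_deg1 (h1 : ∀ e : X _⦋1⦌, Deg1 X e) : IsEmpty (ND1 X) :=
  ⟨fun x => x.2 (h1 x.1)⟩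

variable {X} in
lemma isXLtr_of_forall_deg1 (h1 : ∀ e : X _⦋1⦌, Deg1 X e) (a : Ltr (ZSys X)) : IsXLtr X a := by
  rcases a with ⟨_, σ | ⟨x, _⟩⟩
  · exact ⟨σ, rfl⟩
  · exact (x.2 (h1 x.1)).elim

lemma MAdams_eq_MCs_of_forall_deg1 (h1 : ∀ e : X _⦋1⦌, Deg1 X e) :
    MAdams k X x₀ = MCs k (ZSys X) x₀ := by
  simp only [MAdams, MCs, isXLtr_of_forall_deg1 h1, implies_true, true_and]

lemma NOz_eq_NAdams_of_forall_deg1 (h1 : ∀ e : X _⦋1⦌, Deg1 X e) : NOz k X = NAdams k X := by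
  have := isEmpty_ND1_of_forall_deg1 h1
  simp only [NOz, NAdams, IsEmpty.exists_iff, exists_false, Set.ofPred_false, Set.union_empty]

/-- The six conjuncts say that `Φ` induces an isomorphism of dg algebras between the two
subquotients of the free word algebra. -/
theorem hat_cobar_eq_adams_cobar
    (h1 : ∀ e : X _⦋1⦌, Deg1 X e) :
    ∃ Φ : FWS k (ZSys X) →ₐ[k] FWS k (ZSys X),
      (∀ a ∈ MCs k (ZSys X) x₀, Φ a ∈ MAdams k X x₀) ∧
      (∀ a ∈ NOz k X, Φ a ∈ NAdams k X) ∧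
      (∀ n : ℕ, ∀ a ∈ MCs k (ZSys X) x₀ ⊓ gradeS k (ZSys X) n,
        Φ a ∈ (MAdams k X x₀ ⊓ gradeS k (ZSys X) n) ⊔ NAdams k X) ∧
      (∀ a ∈ MCs k (ZSys X) x₀,
        Φ (dOmS k (ZSys X) x₀ a) - dOmS k (ZSys X) x₀ (Φ a) ∈ NAdams k X) ∧
      (∀ b ∈ MAdams k X x₀, ∃ a ∈ MCs k (ZSys X) x₀, Φ a - b ∈ NAdams k X) ∧
      (∀ a ∈ MCs k (ZSys X) x₀, Φ a ∈ NAdams k X → a ∈ NOz k X) := by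
  rw [MAdams_eq_MCs_of_forall_deg1 k X x₀ h1, ← NOz_eq_NAdams_of_forall_deg1 k X h1]
  refine ⟨AlgHom.id k _, fun _ ha => ha, fun _ ha => ha,
    fun _ _ ha => Submodule.mem_sup_left ha, fun _ _ => ?_, fun b hb => ⟨b, hb, ?_⟩,
    fun _ _ ha => ha⟩ <;>
  simp only [AlgHom.id_apply, sub_self, Submodule.zero_mem]

end CombModel
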